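/- Let k ≥ 1 and σ ≥ k+1, let β > 0, and let N ≥ 4 be an even integer with ε ≤ N^{−1} and τ = (σ ε / β) ln N ≤ 1/2. Consider the Shishkin mesh x_i = 2(1−τ)i/N for 0 ≤ i ≤ N/2 and x_i = 1−τ + 2τ(i − N/2)/N for N/2 < i ≤ N, with elements I_i = [x_{i−1}, x_i]. Let u ∈ C^{k+2}([0,1]) admit a decomposition u = S + E with |S^{(m)}(x)| ≤ C_d and |E^{(m)}(x)| ≤ C_d ε^{−m} e^{−β(1−x)/ε} for all 0 ≤ m ≤ k+2 and x ∈ [0,1], and let P⁻ denote the elementwise Gauss–Radau projection. Then there is a constant C depending only on k, β, σ, C_d (and not on ε or N) such that ‖S − P⁻S‖_{L²(0, 1−τ)} ≤ C N^{−(k+1)} and ‖u − P⁻u‖_{L²(0, 1−τ)} ≤ C N^{−(k+1)}. -/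

import Mathlib

/-!
On each coarse element the Gauss–Radau projection is quasi-optimal in the maximum norm, with a
constant depending only on `k`. On the reference element `[-1, 1]` the Radau data (the moments
against `1, …, t^{k-1}` and the value at `1`) determine a polynomial of degree `≤ k`, so by
equivalence of norms in finite dimension they bound it; an affine change of variables makes
this bound uniform in the element length. Comparing with the Taylor polynomial of `S` gives a
pointwise error `O(h^{k+1}) = O(N^{-(k+1)})`. On `[0, 1 - τ]` the layer part obeys
`|E| ≤ C_d e^{-βτ/ε} = C_d N^{-σ} ≤ C_d N^{-(k+1)}`, so it adds only `O(N^{-(k+1)})` to the error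
for `u`. The coarse elements have total length `≤ 1`, so the pointwise bounds pass to `L²`.
-/

open Set Polynomial MeasureTheory

noncomputable def unitMoment (j : ℕ) : ℝ[X] →ₗ[ℝ] ℝ where
  toFun p := ∫ t in (-1 : ℝ)..1, p.eval t * t ^ j
  map_add' p q := by
    simp only [eval_add, add_mul]
    exact intervalIntegral.integral_add
      ((p.continuous.mul (continuous_pow j)).intervalIntegrable _ _)
      ((q.continuous.mul (continuous_pow j)).intervalIntegrable _ _)
  map_smul' c p := by
    simp only [eval_smul, smul_eq_mul, mul_assoc, intervalIntegral.integral_const_mul,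
      RingHom.id_apply]

noncomputable def gaussRadauData (k : ℕ) : ℝ[X] →ₗ[ℝ] (Fin k → ℝ) × ℝ :=
  (LinearMap.pi fun j : Fin k => unitMoment j).prod (leval 1)

lemma integral_mul_eq_zero_of_unitMoment_eq_zero {k : ℕ} {p q : ℝ[X]}
    (hp : ∀ j < k, unitMoment j p = 0) (hq : q.natDegree < k) :
    ∫ t in (-1 : ℝ)..1, p.eval t * q.eval t = 0 := by
  have hint : ∀ j ∈ Finset.range k, IntervalIntegrable
      (fun t => q.coeff j * (p.eval t * t ^ j)) volume (-1) 1 := fun j _ =>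
    (continuous_const.mul (p.continuous.mul (continuous_pow j))).intervalIntegrable _ _
  calc ∫ t in (-1 : ℝ)..1, p.eval t * q.eval t
      = ∫ t in (-1 : ℝ)..1, ∑ j ∈ Finset.range k, q.coeff j * (p.eval t * t ^ j) := by
        simp_rw [eval_eq_sum_range' hq, Finset.mul_sum, mul_left_comm]
    _ = ∑ j ∈ Finset.range k, q.coeff j * unitMoment j p := by
        rw [intervalIntegral.integral_finsetSum hint]
        simp_rw [intervalIntegral.integral_const_mul]; rfl
    _ = 0 := Finset.sum_eq_zero fun j hj => by rw [hp j (Finset.mem_range.mp hj), mul_zero]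

/-- Unisolvence of the Gauss–Radau data: writing `p = (X - 1) r`, orthogonality of `p` to `r`
gives `∫ (1 - t) r(t)² dt = 0`, which forces `r = 0`. -/
lemma eq_zero_of_gaussRadauData_eq_zero {k : ℕ} {p : ℝ[X]} (hp : p.natDegree ≤ k)
    (h : gaussRadauData k p = 0) : p = 0 := by
  have hmom : ∀ j < k, unitMoment j p = 0 := fun j hj =>
    congrFun (congrArg Prod.fst h) ⟨j, hj⟩
  have hroot : p.IsRoot 1 := congrArg Prod.snd h
  set r := p /ₘ (X - C 1)
  have hpr : (X - C 1) * r = p := mul_divByMonic_eq_iff_isRoot.mpr hroot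
  by_contra hp0
  have hr0 : r ≠ 0 := by rintro hr; simp [hr] at hpr; exact hp0 hpr.symm
  have hrdeg : r.natDegree < k := by
    have := natDegree_mul (X_sub_C_ne_zero (1 : ℝ)) hr0
    rw [hpr, natDegree_X_sub_C] at this
    omega
  obtain ⟨c, hc, hcr⟩ := (Ioo_infinite (show (-1 : ℝ) < 1 by norm_num)).exists_notMem_finset
    r.roots.toFinset
  have hpos : 0 < ∫ t in (-1 : ℝ)..1, (1 - t) * r.eval t ^ 2 := by
    refine intervalIntegral.integral_pos (by norm_num) (by fun_prop) (fun t ht => ?_)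
      ⟨c, Ioo_subset_Icc_self hc, ?_⟩
    · have : 0 ≤ 1 - t := by linarith [ht.2]
      positivity
    · have : r.eval c ≠ 0 := fun h0 => hcr (by simpa [hr0] using h0)
      have : 0 < 1 - c := by linarith [hc.2]
      positivity
  have horth := integral_mul_eq_zero_of_unitMoment_eq_zero hmom hrdeg
  rw [← hpr] at horth
  have : ∫ t in (-1 : ℝ)..1, (1 - t) * r.eval t ^ 2
      = -∫ t in (-1 : ℝ)..1, ((X - C 1) * r).eval t * r.eval t := by
    rw [← intervalIntegral.integral_neg]
    congr 1; ext t; simp; ring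
  linarith

lemma abs_eval_le_mul_norm_toFn {k : ℕ} {p : ℝ[X]} (hp : p.natDegree ≤ k) {s : ℝ}
    (hs : |s| ≤ 1) : |p.eval s| ≤ (k + 1) * ‖toFn (k + 1) p‖ := by
  rw [eval_eq_sum_range' (Nat.lt_succ_of_le hp)]
  calc |∑ i ∈ Finset.range (k + 1), p.coeff i * s ^ i|
      ≤ ∑ i ∈ Finset.range (k + 1), |p.coeff i * s ^ i| := Finset.abs_sum_le_sum_abs _ _
    _ ≤ ∑ _i ∈ Finset.range (k + 1), ‖toFn (k + 1) p‖ := Finset.sum_le_sum fun i hi => by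
        rw [abs_mul, abs_pow]
        have hc : |p.coeff i| ≤ ‖toFn (k + 1) p‖ :=
          norm_le_pi_norm (toFn (k + 1) p) ⟨i, Finset.mem_range.mp hi⟩
        exact (mul_le_of_le_one_right (abs_nonneg _) (pow_le_one₀ (abs_nonneg s) hs)).trans hc
    _ = (k + 1) * ‖toFn (k + 1) p‖ := by simp

lemma exists_abs_eval_le_mul_norm_gaussRadauData (k : ℕ) : ∃ K > 0, ∀ p : ℝ[X],
    p.natDegree ≤ k → ∀ s ∈ Icc (-1 : ℝ) 1, |p.eval s| ≤ K * ‖gaussRadauData k p‖ := by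
  classical
  set T := (gaussRadauData k).comp (ofFn (k + 1))
  have hinj : Function.Injective T := by
    rw [← LinearMap.ker_eq_bot, LinearMap.ker_eq_bot']
    intro c hc
    apply injective_ofFn (k + 1)
    rw [map_zero]
    exact eq_zero_of_gaussRadauData_eq_zero
      (Nat.lt_succ_iff.mp (ofFn_natDegree_lt (by omega) c)) hc
  obtain ⟨K, hK, hanti⟩ := T.injective_iff_antilipschitz.mp hinj
  refine ⟨(k + 1) * K, by positivity, fun p hp s hs => ?_⟩
  have hofFn : ofFn (k + 1) (toFn (k + 1) p) = p :=
    ofFn_comp_toFn_eq_id_of_natDegree_lt (Nat.lt_succ_of_le hp)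
  have hcoeff := ZeroHomClass.bound_of_antilipschitz _ hanti (toFn (k + 1) p)
  rw [LinearMap.comp_apply, hofFn] at hcoeff
  calc |p.eval s| ≤ (k + 1) * ‖toFn (k + 1) p‖ := abs_eval_le_mul_norm_toFn hp (abs_le.mpr hs)
    _ ≤ (k + 1) * (K * ‖gaussRadauData k p‖) := by gcongr
    _ = (k + 1) * K * ‖gaussRadauData k p‖ := by ring

theorem exists_gaussRadau_stability (k : ℕ) : ∃ K > 0, ∀ ⦃p : ℝ[X]⦄ ⦃a b M : ℝ⦄,
    p.natDegree ≤ k → a < b →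
    (∀ q : ℝ[X], q.natDegree ≤ k - 1 → (∀ t ∈ Icc a b, |q.eval t| ≤ 1) →
      |∫ t in a..b, p.eval t * q.eval t| ≤ M * (b - a)) →
    |p.eval b| ≤ M → ∀ t ∈ Icc a b, |p.eval t| ≤ K * M := by
  obtain ⟨K, hK, href⟩ := exists_abs_eval_le_mul_norm_gaussRadauData k
  refine ⟨2 * K, by positivity, fun p a b M hp hab hmom hend t ht => ?_⟩
  set h := (b - a) / 2 with h_def
  set m := (a + b) / 2 with m_def
  have hh : 0 < h := half_pos (sub_pos.mpr hab)
  set φ : ℝ[X] := C m + C h * X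
  set ψ : ℝ[X] := C h⁻¹ * (X - C m)
  have hφ : ∀ s, φ.eval s = m + h * s := fun s => by simp [φ]
  have hφψ : ∀ t, φ.eval (ψ.eval t) = t := fun t => by simp [φ, ψ]; field_simp; ring
  have hψφ : ∀ s, ψ.eval (φ.eval s) = s := fun s => by simp [φ, ψ]; field_simp
  have hψ : ∀ t ∈ Icc a b, |ψ.eval t| ≤ 1 := fun t ht => by
    rw [abs_le]
    simp only [ψ, eval_mul, eval_C, eval_sub, eval_X]
    constructor
    · rw [inv_mul_eq_div, le_div_iff₀ hh]; linarith [ht.1]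
    · rw [inv_mul_eq_div, div_le_iff₀ hh]; linarith [ht.2]
  have hψdeg : ψ.natDegree ≤ 1 :=
    (natDegree_C_mul_le _ _).trans (natDegree_X_sub_C_le _)
  have hφdeg : φ.natDegree ≤ 1 :=
    (natDegree_add_le _ _).trans (max_le (by simp) ((natDegree_C_mul_le _ _).trans (by simp)))
  have hdeg : (p.comp φ).natDegree ≤ k :=
    natDegree_comp_le.trans ((Nat.mul_le_mul hp hφdeg).trans (by simp))
  have hmoment : ∀ j < k, |unitMoment j (p.comp φ)| ≤ 2 * M := fun j hj => by
    have hq : (ψ ^ j).natDegree ≤ k - 1 :=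
      natDegree_pow_le.trans ((Nat.mul_le_mul_left j hψdeg).trans (by omega))
    have hqb : ∀ t ∈ Icc a b, |(ψ ^ j).eval t| ≤ 1 := fun t ht => by
      rw [eval_pow, abs_pow]; exact pow_le_one₀ (abs_nonneg _) (hψ t ht)
    have hsub : ∫ s in (-1 : ℝ)..1, (p.comp φ).eval s * s ^ j
        = h⁻¹ * ∫ t in a..b, p.eval t * (ψ ^ j).eval t := by
      have := intervalIntegral.integral_comp_add_mul
        (fun t => p.eval t * (ψ ^ j).eval t) hh.ne' m (a := -1) (b := 1)
      simp only [← hφ, eval_pow, hψφ, smul_eq_mul] at this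
      rw [hφ, hφ, show m + h * -1 = a by ring, show m + h * 1 = b by ring] at this
      simpa only [eval_comp, eval_pow] using this
    change |∫ s in (-1 : ℝ)..1, (p.comp φ).eval s * s ^ j| ≤ 2 * M
    rw [hsub, abs_mul, abs_inv, abs_of_pos hh]
    calc h⁻¹ * |∫ t in a..b, p.eval t * (ψ ^ j).eval t| ≤ h⁻¹ * (M * (b - a)) := by
          gcongr; exact hmom _ hq hqb
      _ = 2 * M := by field_simp; ring
  have hdata : ‖gaussRadauData k (p.comp φ)‖ ≤ 2 * M := by
    have hM : 0 ≤ M := (abs_nonneg _).trans hend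
    refine norm_prod_le_iff.mpr ⟨(pi_norm_le_iff_of_nonneg (by positivity)).mpr fun j => ?_, ?_⟩
    · exact hmoment j j.isLt
    · change |(p.comp φ).eval 1| ≤ 2 * M
      rw [eval_comp, hφ, show m + h * 1 = b by ring]
      linarith
  have := href (p.comp φ) hdeg (ψ.eval t) (abs_le.mp (hψ t ht))
  rw [eval_comp, hφψ] at this
  calc |p.eval t| ≤ K * (2 * M) := this.trans (by gcongr)
    _ = 2 * K * M := by ring

def IsGaussRadauProjection (k : ℕ) (w : ℝ → ℝ) (a b : ℝ) (P : ℝ[X]) : Prop :=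
  P.natDegree ≤ k ∧
    (∀ q : ℝ[X], q.natDegree ≤ k - 1 →
      ∫ t in a..b, P.eval t * q.eval t = ∫ t in a..b, w t * q.eval t) ∧
    P.eval b = w b

theorem exists_gaussRadau_quasi_optimal (k : ℕ) : ∃ K > 0, ∀ ⦃w : ℝ → ℝ⦄ ⦃a b M : ℝ⦄
    ⦃P π : ℝ[X]⦄, a < b → IntervalIntegrable w volume a b → IsGaussRadauProjection k w a b P →
    π.natDegree ≤ k → (∀ t ∈ Icc a b, |w t - π.eval t| ≤ M) →
    ∀ t ∈ Icc a b, |w t - P.eval t| ≤ K * M := by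
  obtain ⟨K, hK, hstab⟩ := exists_gaussRadau_stability k
  refine ⟨1 + K, by positivity, fun w a b M P π hab hw ⟨hPdeg, hPmom, hPend⟩ hπ hwπ t ht => ?_⟩
  have hdeg : (P - π).natDegree ≤ k := (natDegree_sub_le _ _).trans (max_le hPdeg hπ)
  have hmom : ∀ q : ℝ[X], q.natDegree ≤ k - 1 → (∀ t ∈ Icc a b, |q.eval t| ≤ 1) →
      |∫ t in a..b, (P - π).eval t * q.eval t| ≤ M * (b - a) := fun q hq hq1 => by
    have hpoly : ∀ r : ℝ[X], IntervalIntegrable (fun t => r.eval t * q.eval t) volume a b :=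
      fun r => (r.continuous.mul q.continuous).intervalIntegrable _ _
    have horth : ∫ t in a..b, (P - π).eval t * q.eval t
        = ∫ t in a..b, (w t - π.eval t) * q.eval t := by
      simp only [eval_sub, sub_mul]
      rw [intervalIntegral.integral_sub (hpoly P) (hpoly π), hPmom q hq,
        intervalIntegral.integral_sub (hw.mul_continuousOn q.continuous.continuousOn) (hpoly π)]
    rw [horth, ← Real.norm_eq_abs, ← abs_of_pos (sub_pos.mpr hab)]
    refine intervalIntegral.norm_integral_le_of_norm_le_const fun t ht => ?_
    have ht : t ∈ Icc a b := Ioc_subset_Icc_self ((uIoc_of_le hab.le) ▸ ht)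
    rw [Real.norm_eq_abs, abs_mul]
    exact (mul_le_of_le_one_right (abs_nonneg _) (hq1 t ht)).trans (hwπ t ht)
  have hend : |(P - π).eval b| ≤ M := by
    rw [eval_sub, hPend]; exact hwπ b ⟨hab.le, le_rfl⟩
  calc |w t - P.eval t| = |(w t - π.eval t) - (P - π).eval t| := by rw [eval_sub]; ring_nf
    _ ≤ |w t - π.eval t| + |(P - π).eval t| := abs_sub _ _
    _ ≤ M + K * M := add_le_add (hwπ t ht) (hstab hdeg hab hmom hend t ht)
    _ = (1 + K) * M := by ring

lemma iteratedDerivWithin_subset {f : ℝ → ℝ} {s t : Set ℝ} {n : ℕ} {x : ℝ} (hst : s ⊆ t)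
    (hs : UniqueDiffOn ℝ s) (ht : UniqueDiffOn ℝ t) (hf : ContDiffOn ℝ n f t) (hx : x ∈ s) :
    iteratedDerivWithin n f s x = iteratedDerivWithin n f t x := by
  simp only [iteratedDerivWithin_eq_iteratedFDerivWithin,
    iteratedFDerivWithin_subset hst hs ht hf hx]

theorem exists_polynomial_approx_of_iteratedDerivWithin_le (k : ℕ) {f : ℝ → ℝ} {s : Set ℝ}
    {a b D : ℝ} (hab : a < b) (habs : Icc a b ⊆ s) (hs : UniqueDiffOn ℝ s)
    (hf : ContDiffOn ℝ (k + 1 : ℕ) f s)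
    (hD : ∀ t ∈ Icc a b, |iteratedDerivWithin (k + 1) f s t| ≤ D) :
    ∃ π : ℝ[X], π.natDegree ≤ k ∧ ∀ t ∈ Icc a b, |f t - π.eval t| ≤ D * (b - a) ^ (k + 1) := by
  set π : ℝ[X] := ∑ i ∈ Finset.range (k + 1),
    C ((i.factorial : ℝ)⁻¹ * iteratedDerivWithin i f (Icc a b) a) * (X - C a) ^ i
  have hπdeg : π.natDegree ≤ k := natDegree_sum_le_of_forall_le _ _ fun i hi =>
    (natDegree_C_mul_le _ _).trans <| by
      rw [natDegree_pow, natDegree_X_sub_C, mul_one]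
      exact Nat.lt_succ_iff.mp (Finset.mem_range.mp hi)
  have hπ : ∀ t, π.eval t = taylorWithinEval f k (Icc a b) a t := fun t => by
    simp only [π, taylor_within_apply, eval_finsetSum, eval_mul, eval_C, eval_pow, eval_sub,
      eval_X, smul_eq_mul]
    exact Finset.sum_congr rfl fun i _ => by ring
  refine ⟨π, hπdeg, fun t ht => ?_⟩
  have hD' : ∀ y ∈ Icc a b, ‖iteratedDerivWithin (k + 1) f (Icc a b) y‖ ≤ D := fun y hy => by
    rw [Real.norm_eq_abs, iteratedDerivWithin_subset habs (uniqueDiffOn_Icc hab) hs hf hy]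
    exact hD y hy
  have hD0 : 0 ≤ D := (norm_nonneg _).trans (hD' a ⟨le_rfl, hab.le⟩)
  have htaylor := taylor_mean_remainder_bound hab.le (by exact_mod_cast hf.mono habs) ht hD'
  rw [Real.norm_eq_abs, ← hπ] at htaylor
  calc |f t - π.eval t| ≤ D * (t - a) ^ (k + 1) / k.factorial := htaylor
    _ ≤ D * (t - a) ^ (k + 1) := div_le_self (by have := ht.1; positivity)
        (by exact_mod_cast k.factorial_pos)
    _ ≤ D * (b - a) ^ (k + 1) := by have := ht.1; gcongr; exact ht.2

theorem sqrt_sum_integral_sq_le {ι : Type*} (s : Finset ι) {a b : ι → ℝ} {f : ι → ℝ → ℝ} {B : ℝ}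
    (hB : 0 ≤ B) (hab : ∀ i ∈ s, a i ≤ b i) (hlen : ∑ i ∈ s, (b i - a i) ≤ 1)
    (hf : ∀ i ∈ s, ∀ t ∈ Icc (a i) (b i), |f i t| ≤ B) :
    √(∑ i ∈ s, ∫ t in a i..b i, f i t ^ 2) ≤ B := by
  have hint : ∀ i ∈ s, ∫ t in a i..b i, f i t ^ 2 ≤ B ^ 2 * (b i - a i) := fun i hi => by
    have := intervalIntegral.norm_integral_le_of_norm_le_const (C := B ^ 2)
      (f := fun t => f i t ^ 2) fun t ht => by
        rw [norm_pow, Real.norm_eq_abs]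
        exact pow_le_pow_left₀ (abs_nonneg _)
          (hf i hi t (Ioc_subset_Icc_self (uIoc_of_le (hab i hi) ▸ ht))) 2
    rw [abs_of_nonneg (sub_nonneg.mpr (hab i hi)), Real.norm_eq_abs] at this
    exact (le_abs_self _).trans this
  calc √(∑ i ∈ s, ∫ t in a i..b i, f i t ^ 2) ≤ √(B ^ 2) := by
        refine Real.sqrt_le_sqrt ((Finset.sum_le_sum hint).trans ?_)
        rw [← Finset.mul_sum]
        exact mul_le_of_le_one_right (sq_nonneg B) hlen
    _ = B := Real.sqrt_sq hB

section CoarseMesh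

variable {N : ℕ} {τ : ℝ} {x : ℕ → ℝ} (hN : 0 < N) (hx : ∀ i ≤ N / 2, x i = 2 * (1 - τ) * i / N)
include hN hx

lemma coarseMesh_sub_eq {i : ℕ} (hi : i ∈ Finset.Icc 1 (N / 2)) :
    x i - x (i - 1) = 2 * (1 - τ) / N := by
  obtain ⟨hi1, hiN⟩ := Finset.mem_Icc.mp hi
  rw [hx i hiN, hx (i - 1) (by omega), Nat.cast_sub hi1]
  field_simp
  ring

lemma coarseMesh_lt (hτ : τ < 1) {i : ℕ} (hi : i ∈ Finset.Icc 1 (N / 2)) : x (i - 1) < x i := by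
  have : 0 < 1 - τ := by linarith
  have : 0 < 2 * (1 - τ) / N := by positivity
  linarith [coarseMesh_sub_eq hN hx hi]

lemma coarseMesh_sub_le (hτ : 0 ≤ τ) {i : ℕ} (hi : i ∈ Finset.Icc 1 (N / 2)) :
    x i - x (i - 1) ≤ 2 / N := by
  rw [coarseMesh_sub_eq hN hx hi]
  gcongr
  linarith

lemma Icc_coarseMesh_subset (hτ : τ ≤ 1) {i : ℕ} (hi : i ∈ Finset.Icc 1 (N / 2)) :
    Icc (x (i - 1)) (x i) ⊆ Icc 0 (1 - τ) := by
  obtain ⟨hi1, hiN⟩ := Finset.mem_Icc.mp hi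
  have hN' : (0 : ℝ) < N := by exact_mod_cast hN
  have h2i : 2 * (i : ℝ) ≤ N := by exact_mod_cast (Nat.mul_div_le N 2).trans' (by omega)
  have : 0 ≤ 1 - τ := by linarith
  refine Icc_subset_Icc ?_ ?_
  · rw [hx (i - 1) (by omega)]
    positivity
  · rw [hx i hiN, div_le_iff₀ hN']
    nlinarith

lemma sum_coarseMesh_sub_le (hτ0 : 0 ≤ τ) (hτ1 : τ ≤ 1) :
    ∑ i ∈ Finset.Icc 1 (N / 2), (x i - x (i - 1)) ≤ 1 := by
  rw [Finset.sum_congr rfl fun i hi => coarseMesh_sub_eq hN hx hi, Finset.sum_const,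
    Nat.card_Icc, Nat.add_sub_cancel, nsmul_eq_mul]
  have : 0 ≤ 1 - τ := by linarith
  calc ((N / 2 : ℕ) : ℝ) * (2 * (1 - τ) / N) ≤ (N / 2 : ℝ) * (2 * (1 - τ) / N) := by
        gcongr
        exact Nat.cast_div_le
    _ = 1 - τ := by field_simp
    _ ≤ 1 := by linarith

lemma exists_polynomial_approx_on_coarseMesh {k : ℕ} {f : ℝ → ℝ} {D : ℝ} (hτ0 : 0 ≤ τ)
    (hτ1 : τ < 1) (hf : ContDiffOn ℝ (k + 1 : ℕ) f (Icc 0 1))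
    (hD : ∀ t ∈ Icc (0 : ℝ) 1, |iteratedDerivWithin (k + 1) f (Icc 0 1) t| ≤ D)
    {i : ℕ} (hi : i ∈ Finset.Icc 1 (N / 2)) : ∃ π : ℝ[X], π.natDegree ≤ k ∧
      ∀ t ∈ Icc (x (i - 1)) (x i), |f t - π.eval t| ≤ D * 2 ^ (k + 1) * ((N : ℝ) ^ (k + 1))⁻¹ := by
  have hlt := coarseMesh_lt hN hx hτ1 hi
  have hsub := (Icc_coarseMesh_subset hN hx hτ1.le hi).trans
    (Icc_subset_Icc_right (show 1 - τ ≤ 1 by linarith))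
  obtain ⟨π, hπ, hfπ⟩ := exists_polynomial_approx_of_iteratedDerivWithin_le k hlt hsub
    (uniqueDiffOn_Icc zero_lt_one) hf fun t ht => hD t (hsub ht)
  have hD0 : 0 ≤ D := (abs_nonneg _).trans (hD 0 ⟨le_rfl, zero_le_one⟩)
  refine ⟨π, hπ, fun t ht => (hfπ t ht).trans ?_⟩
  calc D * (x i - x (i - 1)) ^ (k + 1) ≤ D * (2 / N) ^ (k + 1) := by
        have := coarseMesh_sub_le hN hx hτ0 hi
        have := hlt.le
        gcongr
    _ = D * 2 ^ (k + 1) * ((N : ℝ) ^ (k + 1))⁻¹ := by rw [div_pow]; ring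

end CoarseMesh

theorem exists_coarseMesh_L2_error_le (k : ℕ) : ∃ K > 0, ∀ ⦃N : ℕ⦄ ⦃τ M : ℝ⦄ ⦃x : ℕ → ℝ⦄
    ⦃w : ℝ → ℝ⦄ ⦃P : ℕ → ℝ[X]⦄, 0 < N → 0 ≤ τ → τ < 1 → 0 ≤ M →
    (∀ i ≤ N / 2, x i = 2 * (1 - τ) * i / N) → ContinuousOn w (Icc 0 (1 - τ)) →
    (∀ i ∈ Finset.Icc 1 (N / 2), IsGaussRadauProjection k w (x (i - 1)) (x i) (P i)) →
    (∀ i ∈ Finset.Icc 1 (N / 2), ∃ π : ℝ[X], π.natDegree ≤ k ∧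
      ∀ t ∈ Icc (x (i - 1)) (x i), |w t - π.eval t| ≤ M) →
    √(∑ i ∈ Finset.Icc 1 (N / 2), ∫ t in x (i - 1)..x i, (w t - (P i).eval t) ^ 2) ≤ K * M := by
  obtain ⟨K, hK, hquasi⟩ := exists_gaussRadau_quasi_optimal k
  refine ⟨K, hK, fun N τ M x w P hN hτ0 hτ1 hM hx hw hP happrox => ?_⟩
  have hlt := fun i (hi : i ∈ Finset.Icc 1 (N / 2)) => coarseMesh_lt hN hx hτ1 hi
  refine sqrt_sum_integral_sq_le _ (by positivity) (fun i hi => (hlt i hi).le)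
    (sum_coarseMesh_sub_le hN hx hτ0 hτ1.le) fun i hi t ht => ?_
  obtain ⟨π, hπ, hwπ⟩ := happrox i hi
  have hwi : IntervalIntegrable w volume (x (i - 1)) (x i) :=
    (hw.mono (Icc_coarseMesh_subset hN hx hτ1.le hi)).intervalIntegrable_of_Icc (hlt i hi).le
  exact hquasi (hlt i hi) hwi (hP i hi) hπ hwπ t ht

lemma exp_layer_le_inv_pow {β σ ε : ℝ} {N k : ℕ} (hβ : 0 < β) (hε : 0 < ε) (hN : 0 < N)
    (hσ : (k : ℝ) + 1 ≤ σ) {τ t : ℝ} (hτ : τ = σ * ε / β * Real.log N) (ht : t ≤ 1 - τ) :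
    Real.exp (-β * (1 - t) / ε) ≤ ((N : ℝ) ^ (k + 1))⁻¹ := by
  have hN' : (0 : ℝ) < N := by exact_mod_cast hN
  have hlog : 0 ≤ Real.log N := Real.log_nonneg (by exact_mod_cast hN)
  calc Real.exp (-β * (1 - t) / ε) ≤ Real.exp (-((k + 1) * Real.log N)) := by
        refine Real.exp_le_exp.mpr ?_
        have h1 : σ * Real.log N ≤ β * (1 - t) / ε := by
          rw [le_div_iff₀ hε]
          have := mul_le_mul_of_nonneg_left (show σ * ε / β * Real.log N ≤ 1 - t by linarith) hβ.le
          field_simp at this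
          linarith
        have h2 : ((k : ℝ) + 1) * Real.log N ≤ σ * Real.log N := by gcongr
        rw [neg_mul, neg_div]
        linarith
    _ = ((N : ℝ) ^ (k + 1))⁻¹ := by
        rw [Real.exp_neg, ← Nat.cast_add_one, ← Real.log_pow, Real.exp_log (by positivity)]

theorem statement13_general (k : ℕ) (β σ Cd : ℝ)
    (hβ : 0 < β) (hσ : (k : ℝ) + 1 ≤ σ) (hCd : 0 < Cd) :
    ∃ C > 0, ∀ (N : ℕ) (ε τ : ℝ) (x : ℕ → ℝ) (u S E : ℝ → ℝ)
      (Pu PS : ℕ → Polynomial ℝ),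
      4 ≤ N → N % 2 = 0 →
      0 < ε → ε ≤ (N : ℝ)⁻¹ →
      τ = σ * ε / β * Real.log N → τ ≤ 1 / 2 →
      (∀ i ≤ N / 2, x i = 2 * (1 - τ) * i / N) →
      (∀ i, N / 2 < i → i ≤ N → x i = 1 - τ + 2 * τ * ((i : ℝ) - (N / 2 : ℕ)) / N) →
      ContDiffOn ℝ (k + 2 : ℕ) S (Icc 0 1) →
      ContDiffOn ℝ (k + 2 : ℕ) E (Icc 0 1) →
      (∀ t ∈ Icc (0:ℝ) 1, u t = S t + E t) →
      (∀ m ≤ k + 2, ∀ t ∈ Icc (0:ℝ) 1,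
        |iteratedDerivWithin m S (Icc 0 1) t| ≤ Cd) →
      (∀ m ≤ k + 2, ∀ t ∈ Icc (0:ℝ) 1,
        |iteratedDerivWithin m E (Icc 0 1) t| ≤
          Cd / ε ^ m * Real.exp (-β * (1 - t) / ε)) →
      (∀ i ∈ Finset.Icc 1 N, (Pu i).natDegree ≤ k) →
      (∀ i ∈ Finset.Icc 1 N, ∀ q : Polynomial ℝ, q.natDegree ≤ k - 1 →
        (∫ t in (x (i - 1))..(x i), (Pu i).eval t * q.eval t)
          = ∫ t in (x (i - 1))..(x i), u t * q.eval t) →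
      (∀ i ∈ Finset.Icc 1 N, (Pu i).eval (x i) = u (x i)) →
      (∀ i ∈ Finset.Icc 1 N, (PS i).natDegree ≤ k) →
      (∀ i ∈ Finset.Icc 1 N, ∀ q : Polynomial ℝ, q.natDegree ≤ k - 1 →
        (∫ t in (x (i - 1))..(x i), (PS i).eval t * q.eval t)
          = ∫ t in (x (i - 1))..(x i), S t * q.eval t) →
      (∀ i ∈ Finset.Icc 1 N, (PS i).eval (x i) = S (x i)) →
      Real.sqrt (∑ i ∈ Finset.Icc 1 (N / 2), ∫ t in (x (i - 1))..(x i),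
          (S t - (PS i).eval t) ^ 2) ≤ C * ((N : ℝ) ^ (k + 1))⁻¹ ∧
      Real.sqrt (∑ i ∈ Finset.Icc 1 (N / 2), ∫ t in (x (i - 1))..(x i),
          (u t - (Pu i).eval t) ^ 2) ≤ C * ((N : ℝ) ^ (k + 1))⁻¹ := by
  obtain ⟨K, hK, hL2⟩ := exists_coarseMesh_L2_error_le k
  refine ⟨K * (Cd * (2 ^ (k + 1) + 1)), by positivity, ?_⟩
  intro N ε τ x u S E Pu PS hN _ hε _ hτ hτhalf hx _ hS hE hu hSb hEb
    hPudeg hPumom hPuend hPSdeg hPSmom hPSend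
  have hN0 : 0 < N := by omega
  have hτ0 : 0 ≤ τ := by
    have : 0 < σ := (by positivity : (0 : ℝ) < k + 1).trans_le hσ
    have := Real.log_natCast_nonneg N
    rw [hτ]; positivity
  set Q := ((N : ℝ) ^ (k + 1))⁻¹
  have hcoarse : ∀ i ∈ Finset.Icc 1 (N / 2), Icc (x (i - 1)) (x i) ⊆ Icc 0 (1 - τ) :=
    fun i => Icc_coarseMesh_subset hN0 hx (by linarith)
  have hunit : Icc 0 (1 - τ) ⊆ Icc (0 : ℝ) 1 := Icc_subset_Icc_right (by linarith)
  have hmem : ∀ i ∈ Finset.Icc 1 (N / 2), i ∈ Finset.Icc 1 N :=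
    fun i hi => Finset.Icc_subset_Icc_right (Nat.div_le_self N 2) hi
  have hSπ := fun i (hi : i ∈ Finset.Icc 1 (N / 2)) =>
    exists_polynomial_approx_on_coarseMesh hN0 hx hτ0 (by linarith)
      (hS.of_le (by norm_cast; omega)) (hSb (k + 1) (by omega)) hi
  have hEQ : ∀ t ∈ Icc 0 (1 - τ), |E t| ≤ Cd * Q := fun t ht => by
    simpa using (hEb 0 (by omega) t (hunit ht)).trans
      (mul_le_mul_of_nonneg_left (exp_layer_le_inv_pow hβ hε hN0 hσ hτ ht.2) (by positivity))
  constructor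
  · refine (hL2 (M := Cd * 2 ^ (k + 1) * Q) hN0 hτ0 (by linarith) (by positivity) hx
      (hS.continuousOn.mono hunit)
      (fun i hi => ⟨hPSdeg i (hmem i hi), hPSmom i (hmem i hi), hPSend i (hmem i hi)⟩) hSπ).trans ?_
    rw [mul_assoc K]
    gcongr
    linarith
  · refine (hL2 (M := Cd * (2 ^ (k + 1) + 1) * Q) hN0 hτ0 (by linarith) (by positivity) hx
      (((hS.continuousOn.add hE.continuousOn).congr hu).mono hunit)
      (fun i hi => ⟨hPudeg i (hmem i hi), hPumom i (hmem i hi), hPuend i (hmem i hi)⟩)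
      fun i hi => ?_).trans_eq (by ring)
    obtain ⟨π, hπ, hSπ⟩ := hSπ i hi
    refine ⟨π, hπ, fun t ht => ?_⟩
    rw [hu t (hunit (hcoarse i hi ht)), add_sub_right_comm]
    calc |S t - π.eval t + E t| ≤ |S t - π.eval t| + |E t| := abs_add_le _ _
      _ ≤ Cd * 2 ^ (k + 1) * Q + Cd * Q := add_le_add (hSπ t ht) (hEQ t (hcoarse i hi ht))
      _ = Cd * (2 ^ (k + 1) + 1) * Q := by ring

/-- `L²` bounds on the coarse region `(0, 1−τ)` of the Shishkin mesh for the
Gauss–Radau projection errors of the smooth part and of the solution: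
`‖S − P⁻S‖_{L²(0,1−τ)} ≤ C N^{−(k+1)}` and `‖u − P⁻u‖_{L²(0,1−τ)} ≤ C N^{−(k+1)}`,
with `C` independent of `ε` and `N`. -/
theorem statement13 (k : ℕ) (hk : 1 ≤ k) (β σ Cd : ℝ)
    (hβ : 0 < β) (hσ : (k : ℝ) + 1 ≤ σ) (hCd : 0 < Cd) :
    ∃ C > 0, ∀ (N : ℕ) (ε τ : ℝ) (x : ℕ → ℝ) (u S E : ℝ → ℝ)
      (Pu PS : ℕ → Polynomial ℝ),
      4 ≤ N → N % 2 = 0 →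
      0 < ε → ε ≤ (N : ℝ)⁻¹ →
      τ = σ * ε / β * Real.log N → τ ≤ 1 / 2 →
      (∀ i ≤ N / 2, x i = 2 * (1 - τ) * i / N) →
      (∀ i, N / 2 < i → i ≤ N → x i = 1 - τ + 2 * τ * ((i : ℝ) - (N / 2 : ℕ)) / N) →
      ContDiffOn ℝ (k + 2 : ℕ) S (Icc 0 1) →
      ContDiffOn ℝ (k + 2 : ℕ) E (Icc 0 1) →
      (∀ t ∈ Icc (0:ℝ) 1, u t = S t + E t) →
      (∀ m ≤ k + 2, ∀ t ∈ Icc (0:ℝ) 1,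
        |iteratedDerivWithin m S (Icc 0 1) t| ≤ Cd) →
      (∀ m ≤ k + 2, ∀ t ∈ Icc (0:ℝ) 1,
        |iteratedDerivWithin m E (Icc 0 1) t| ≤
          Cd / ε ^ m * Real.exp (-β * (1 - t) / ε)) →
      (∀ i ∈ Finset.Icc 1 N, (Pu i).natDegree ≤ k) →
      (∀ i ∈ Finset.Icc 1 N, ∀ q : Polynomial ℝ, q.natDegree ≤ k - 1 →
        (∫ t in (x (i - 1))..(x i), (Pu i).eval t * q.eval t)
          = ∫ t in (x (i - 1))..(x i), u t * q.eval t) →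
      (∀ i ∈ Finset.Icc 1 N, (Pu i).eval (x i) = u (x i)) →
      (∀ i ∈ Finset.Icc 1 N, (PS i).natDegree ≤ k) →
      (∀ i ∈ Finset.Icc 1 N, ∀ q : Polynomial ℝ, q.natDegree ≤ k - 1 →
        (∫ t in (x (i - 1))..(x i), (PS i).eval t * q.eval t)
          = ∫ t in (x (i - 1))..(x i), S t * q.eval t) →
      (∀ i ∈ Finset.Icc 1 N, (PS i).eval (x i) = S (x i)) →
      Real.sqrt (∑ i ∈ Finset.Icc 1 (N / 2), ∫ t in (x (i - 1))..(x i),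
          (S t - (PS i).eval t) ^ 2) ≤ C * ((N : ℝ) ^ (k + 1))⁻¹ ∧
      Real.sqrt (∑ i ∈ Finset.Icc 1 (N / 2), ∫ t in (x (i - 1))..(x i),
          (u t - (Pu i).eval t) ^ 2) ≤ C * ((N : ℝ) ^ (k + 1))⁻¹ :=
  statement13_general k β σ Cd hβ hσ hCd
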